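/- arXiv:math/0001003 — 2 statements merged into one kernel-verified Lean document; each statement's English description precedes it below -/
import Mathlib

section
/- In the ring R_B/I_B as above, if σ is a 2-partition that does not break an ordered partition τ (i.e., there is a consecutive pair (τ_b, τ_{b+1}) with τ_b \ σ_1 ≠ ∅ and τ_{b+1} ∩ σ_1 ≠ ∅), then l_σ · m(τ) ≡ 0 mod I_B. -/
/-- The ideal `I_B` in the ring `R_B` with generators `l_σ` indexed by 2-partitions
(encoded by their first components), generated by the linear relations `r¹_{ij}` and the
quadratic relations `l_σ l_τ` for incompatible pairs. -/
noncomputable def IB (α : Type) [Fintype α] [DecidableEq α]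
    (k : Type) [CommRing k] : Ideal (MvPolynomial (Finset α) k) :=
  Ideal.span
    ({x | ∃ i j : α, i ≠ j ∧ x =
        (∑ s : Finset α, if i ∈ s ∧ j ∉ s then MvPolynomial.X s else 0) -
        (∑ s : Finset α, if j ∈ s ∧ i ∉ s then MvPolynomial.X s else 0)} ∪
     {x | ∃ s t : Finset α,
        (∃ i j : α, i ∈ s ∧ j ∉ s ∧ j ∈ t ∧ i ∉ t) ∧
        x = MvPolynomial.X s * MvPolynomial.X t})

/-- The partial union `τ_1 ∪ … ∪ τ_{a+1}` of an ordered partition. -/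
def pu {α : Type} [DecidableEq α] {M : ℕ} [Fintype α]
    (τ : Fin (M + 1) → Finset α) (a : Fin M) : Finset α :=
  (Finset.univ.filter (fun b : Fin (M + 1) => b.val ≤ a.val)).biUnion τ

/-- The good monomial `m(τ)` of an ordered partition `τ` of length `N+1`: the product of
the variables attached to its good family of 2-partitions. -/
noncomputable def gm {α : Type} [Fintype α] [DecidableEq α] {k : Type} [CommRing k]
    {N : ℕ} (τ : Fin (N + 1) → Finset α) : MvPolynomial (Finset α) k :=
  ∏ a : Fin N, MvPolynomial.X (pu τ a)

/-!
If `i ∈ τ_b \ σ₁` and `j ∈ τ_{b+1} ∩ σ₁`, then the 2-partition with first component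
`τ_1 ∪ … ∪ τ_b`, one of the factors of `m(τ)`, contains `i` but not `j`, while `σ₁` contains
`j` but not `i`. So `l_σ` and that factor form an incompatible pair, whose product is a
generator of `I_B` dividing `l_σ · m(τ)`.
-/

section GoodMonomial

variable {α : Type} [Fintype α] [DecidableEq α] {M : ℕ} (τ : Fin (M + 1) → Finset α)

theorem subset_pu {b : Fin (M + 1)} {a : Fin M} (hba : b.val ≤ a.val) : τ b ⊆ pu τ a :=
  Finset.subset_biUnion_of_mem τ (Finset.mem_filter.2 ⟨Finset.mem_univ b, hba⟩)

theorem disjoint_pu {c : Fin (M + 1)} {a : Fin M}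
    (hdisj : ∀ i j, i ≠ j → Disjoint (τ i) (τ j)) (hac : a.val < c.val) :
    Disjoint (τ c) (pu τ a) := by
  refine (Finset.disjoint_biUnion_right _ _ _).2 fun d hd => hdisj c d ?_
  rintro rfl
  have := (Finset.mem_filter.1 hd).2
  omega

theorem X_pu_dvd_gm {k : Type} [CommRing k] (a : Fin M) :
    (MvPolynomial.X (pu τ a) : MvPolynomial (Finset α) k) ∣ gm τ :=
  Finset.dvd_prod_of_mem _ (Finset.mem_univ a)

end GoodMonomial

theorem X_mul_X_mem_IB {α : Type} [Fintype α] [DecidableEq α] {k : Type} [CommRing k]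
    {s t : Finset α} {i j : α} (his : i ∈ s) (hjs : j ∉ s) (hjt : j ∈ t) (hit : i ∉ t) :
    MvPolynomial.X s * MvPolynomial.X t ∈ IB α k :=
  Ideal.subset_span (Or.inr ⟨s, t, ⟨i, j, his, hjs, hjt, hit⟩, rfl⟩)

theorem stmt_13_general {α : Type} [Fintype α] [DecidableEq α] {k : Type} [CommRing k]
    (N : ℕ) (τ : Fin (N + 1) → Finset α)
    (hdisj : ∀ i j, i ≠ j → Disjoint (τ i) (τ j))
    (s : Finset α)
    (hnb : ∃ b c : Fin (N + 1), c.val = b.val + 1 ∧ (τ b \ s).Nonempty ∧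
      (τ c ∩ s).Nonempty) :
    MvPolynomial.X s * gm (k := k) τ ∈ IB α k := by
  obtain ⟨b, c, hcb, ⟨i, hi⟩, ⟨j, hj⟩⟩ := hnb
  rw [Finset.mem_sdiff] at hi
  rw [Finset.mem_inter] at hj
  let a : Fin N := ⟨b.val, by omega⟩
  have hia : i ∈ pu τ a := subset_pu τ le_rfl hi.1
  have hja : j ∉ pu τ a := Finset.disjoint_left.1 (disjoint_pu τ hdisj (by simp [a, hcb])) hj.1
  obtain ⟨r, hr⟩ := X_pu_dvd_gm (k := k) τ a
  rw [hr, ← mul_assoc]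
  exact Ideal.mul_mem_right _ _ (X_mul_X_mem_IB hj.2 hi.2 hia hja)

/-- If the 2-partition `σ` (with first component `s`) does not break the ordered
partition `τ` — i.e. there is a bad pair `(τ_b, τ_{b+1})` with `τ_b \ σ_1 ≠ ∅` and
`τ_{b+1} ∩ σ_1 ≠ ∅` — then `l_σ · m(τ) ≡ 0 mod I_B`. -/
theorem stmt_13 {α : Type} [Fintype α] [DecidableEq α] {k : Type} [CommRing k]
    (N : ℕ) (τ : Fin (N + 1) → Finset α)
    (hne : ∀ i, (τ i).Nonempty) (hdisj : ∀ i j, i ≠ j → Disjoint (τ i) (τ j))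
    (hcov : Finset.univ.biUnion τ = Finset.univ)
    (s : Finset α) (hs1 : s.Nonempty) (hs2 : s ≠ Finset.univ)
    (hnb : ∃ b c : Fin (N + 1), c.val = b.val + 1 ∧ (τ b \ s).Nonempty ∧
      (τ c ∩ s).Nonempty) :
    MvPolynomial.X s * gm (k := k) τ ∈ IB α k :=
  stmt_13_general N τ hdisj s hnb
end

section
/- In R_B/I_B as above, if σ breaks τ between τ_a and τ_{a+1} (i.e., σ_1 = τ_1 ∪ ... ∪ τ_a), then for any choice of i ∈ τ_a and j ∈ τ_{a+1}: l_σ · m(τ) ≡ − ∑_{α: i ∈ α_1} m(τ(α)) − ∑_{β: j ∈ β_2} m(τ(β)) mod I_B, where α runs over 2-partitions of τ_a, β over 2-partitions of τ_{a+1}, and τ(α), τ(β) denote the refinements of τ obtained by replacing τ_a by (α_1, α_2), resp. τ_{a+1} by (β_1, β_2). -/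
set_option linter.unusedSectionVars false
set_option linter.unreachableTactic false
set_option linter.unusedTactic false
set_option maxHeartbeats 1000000


/-- The refinement `τ(α)` of an ordered partition `τ`, replacing the part with index `a`
by the two sets `s1, s2`. -/
def refine {α : Type} {N : ℕ} (τ : Fin (N + 1) → Finset α) (a : Fin (N + 1))
    (s1 s2 : Finset α) : Fin (N + 2) → Finset α := fun b =>
  if hb : b.val < a.val then τ ⟨b.val, by have := a.isLt; omega⟩
  else if b.val = a.val then s1
  else if b.val = a.val + 1 then s2
  else τ ⟨b.val - 1, by have := b.isLt; omega⟩

variable {α : Type} [Fintype α] [DecidableEq α]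

def puLt {N : ℕ} (τ : Fin (N + 1) → Finset α) (c : Fin (N + 1)) : Finset α :=
  (Finset.univ.filter (fun b : Fin (N + 1) => b.val < c.val)).biUnion τ

lemma mem_pu {M : ℕ} {τ : Fin (M + 1) → Finset α} {a : Fin M} {x : α} :
    x ∈ pu τ a ↔ ∃ b : Fin (M + 1), b.val ≤ a.val ∧ x ∈ τ b := by
  simp [pu]

lemma mem_puLt {N : ℕ} {τ : Fin (N + 1) → Finset α} {c : Fin (N + 1)} {x : α} :
    x ∈ puLt τ c ↔ ∃ b : Fin (N + 1), b.val < c.val ∧ x ∈ τ b := by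
  simp [puLt]

lemma refine_lt {N : ℕ} (τ : Fin (N + 1) → Finset α) (c : Fin (N + 1)) (s1 s2 : Finset α)
    (d : Fin (N + 2)) (h : d.val < c.val) :
    refine τ c s1 s2 d = τ ⟨d.val, by first | omega | (simp only [Fin.val_mk]; omega)⟩ := dif_pos h

lemma refine_eq1 {N : ℕ} (τ : Fin (N + 1) → Finset α) (c : Fin (N + 1)) (s1 s2 : Finset α)
    (d : Fin (N + 2)) (h : d.val = c.val) :
    refine τ c s1 s2 d = s1 := by
  unfold refine; rw [dif_neg (by first | omega | (simp only [Fin.val_mk]; omega)), if_pos h]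

lemma refine_eq2 {N : ℕ} (τ : Fin (N + 1) → Finset α) (c : Fin (N + 1)) (s1 s2 : Finset α)
    (d : Fin (N + 2)) (h : d.val = c.val + 1) :
    refine τ c s1 s2 d = s2 := by
  unfold refine; rw [dif_neg (by first | omega | (simp only [Fin.val_mk]; omega)), if_neg (by first | omega | (simp only [Fin.val_mk]; omega)), if_pos h]

lemma refine_gt {N : ℕ} (τ : Fin (N + 1) → Finset α) (c : Fin (N + 1)) (s1 s2 : Finset α)
    (d : Fin (N + 2)) (h : c.val + 1 < d.val) :
    refine τ c s1 s2 d = τ ⟨d.val - 1, by first | omega | (simp only [Fin.val_mk]; omega)⟩ := by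
  unfold refine; rw [dif_neg (by first | omega | (simp only [Fin.val_mk]; omega)), if_neg (by first | omega | (simp only [Fin.val_mk]; omega)), if_neg (by first | omega | (simp only [Fin.val_mk]; omega))]

-- pu of refine at position c
lemma pu_refine_self {N : ℕ} (τ : Fin (N + 1) → Finset α) (c : Fin (N + 1)) (s1 s2 : Finset α) :
    pu (refine τ c s1 s2) c = puLt τ c ∪ s1 := by
  ext x
  rw [mem_pu, Finset.mem_union, mem_puLt]
  constructor
  · rintro ⟨d, hd, hx⟩
    rcases lt_or_eq_of_le hd with h | h
    · rw [refine_lt τ c s1 s2 d h] at hx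
      exact Or.inl ⟨⟨d.val, by first | omega | (simp only [Fin.val_mk]; omega)⟩, h, hx⟩
    · rw [refine_eq1 τ c s1 s2 d h] at hx
      exact Or.inr hx
  · rintro (⟨e, he, hx⟩ | hx)
    · refine ⟨⟨e.val, by first | omega | (simp only [Fin.val_mk]; omega)⟩, by first | omega | (simp only [Fin.val_mk]; omega), ?_⟩
      rw [refine_lt τ c s1 s2 _ he]
      simpa using hx
    · exact ⟨⟨c.val, by first | omega | (simp only [Fin.val_mk]; omega)⟩, le_rfl, by rw [refine_eq1 τ c s1 s2 _ rfl]; exact hx⟩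

lemma pu_refine_other {N : ℕ} (τ : Fin (N + 1) → Finset α) (c : Fin (N + 1)) (s1 s2 : Finset α)
    (h : s1 ∪ s2 = τ c) (b : Fin N) :
    pu (refine τ c s1 s2) (c.succAbove b) = pu τ b := by
  ext x
  rw [mem_pu, mem_pu]
  by_cases hb : b.val < c.val
  · have hsa : (c.succAbove b).val = b.val := by
      rw [Fin.succAbove]
      rw [if_pos (by simpa [Fin.lt_def] using hb)]; simp
    rw [hsa]
    constructor
    · rintro ⟨d, hd, hx⟩
      rw [refine_lt τ c s1 s2 d (by first | omega | (simp only [Fin.val_mk]; omega))] at hx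
      exact ⟨⟨d.val, by first | omega | (simp only [Fin.val_mk]; omega)⟩, hd, hx⟩
    · rintro ⟨e, he, hx⟩
      refine ⟨⟨e.val, by first | omega | (simp only [Fin.val_mk]; omega)⟩, he, ?_⟩
      rw [refine_lt τ c s1 s2 _ (by simp; omega)]
      simpa using hx
  · push_neg at hb
    have hsa : (c.succAbove b).val = b.val + 1 := by
      rw [Fin.succAbove]
      rw [if_neg (by simpa [Fin.lt_def] using hb)]
      rfl
    rw [hsa]
    constructor
    · rintro ⟨d, hd, hx⟩
      rcases Nat.lt_trichotomy d.val c.val with h1 | h1 | h1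
      · rw [refine_lt τ c s1 s2 d h1] at hx
        exact ⟨⟨d.val, by first | omega | (simp only [Fin.val_mk]; omega)⟩, by first | omega | (simp only [Fin.val_mk]; omega), hx⟩
      · rw [refine_eq1 τ c s1 s2 d h1] at hx
        refine ⟨c, by first | omega | (simp only [Fin.val_mk]; omega), ?_⟩
        rw [← h]; exact Finset.mem_union_left _ hx
      · rcases Nat.lt_or_ge d.val (c.val + 2) with h2 | h2
        · rw [refine_eq2 τ c s1 s2 d (by first | omega | (simp only [Fin.val_mk]; omega))] at hx
          refine ⟨c, by first | omega | (simp only [Fin.val_mk]; omega), ?_⟩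
          rw [← h]; exact Finset.mem_union_right _ hx
        · rw [refine_gt τ c s1 s2 d (by first | omega | (simp only [Fin.val_mk]; omega))] at hx
          exact ⟨⟨d.val - 1, by first | omega | (simp only [Fin.val_mk]; omega)⟩, by first | omega | (simp only [Fin.val_mk]; omega), hx⟩
    · rintro ⟨e, he, hx⟩
      rcases Nat.lt_trichotomy e.val c.val with h1 | h1 | h1
      · refine ⟨⟨e.val, by first | omega | (simp only [Fin.val_mk]; omega)⟩, by first | omega | (simp only [Fin.val_mk]; omega), ?_⟩
        rw [refine_lt τ c s1 s2 _ (by simp; omega)]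
        simpa using hx
      · have : x ∈ s1 ∪ s2 := by rw [h]; have : e = c := Fin.ext h1; rwa [this] at hx
        rcases Finset.mem_union.mp this with h2 | h2
        · exact ⟨⟨c.val, by first | omega | (simp only [Fin.val_mk]; omega)⟩, by first | omega | (simp only [Fin.val_mk]; omega), by rw [refine_eq1 τ c s1 s2 _ rfl]; exact h2⟩
        · exact ⟨⟨c.val + 1, by first | omega | (simp only [Fin.val_mk]; omega)⟩, by first | omega | (simp only [Fin.val_mk]; omega), by rw [refine_eq2 τ c s1 s2 _ rfl]; exact h2⟩
      · refine ⟨⟨e.val + 1, by first | omega | (simp only [Fin.val_mk]; omega)⟩, by first | omega | (simp only [Fin.val_mk]; omega), ?_⟩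
        rw [refine_gt τ c s1 s2 _ (by simp; omega)]
        simpa using hx

lemma gm_refine {k : Type} [CommRing k] {N : ℕ} (τ : Fin (N + 1) → Finset α)
    (c : Fin (N + 1)) (s1 s2 : Finset α) (h : s1 ∪ s2 = τ c) :
    gm (k := k) (refine τ c s1 s2) = MvPolynomial.X (puLt τ c ∪ s1) * gm (k := k) τ := by
  unfold gm
  rw [Fin.prod_univ_succAbove (fun b : Fin (N + 1) => MvPolynomial.X (pu (refine τ c s1 s2) b)) c]
  rw [pu_refine_self]
  congr 1
  exact Finset.prod_congr rfl fun b _ => by rw [pu_refine_other τ c s1 s2 h b]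

/-- If `σ` breaks `τ` between `τ_a` and `τ_{a+1}` (i.e. `σ_1 = τ_1 ∪ … ∪ τ_a`), then for
any `i ∈ τ_a`, `j ∈ τ_{a+1}`:
`l_σ·m(τ) ≡ −∑_{α : i∈α_1} m(τ(α)) − ∑_{β : j∈β_2} m(τ(β)) mod I_B`,
where `α` runs over 2-partitions of `τ_a` and `β` over 2-partitions of `τ_{a+1}`. -/
theorem stmt_14 {α : Type} [Fintype α] [DecidableEq α] {k : Type} [CommRing k]
    (N : ℕ) (τ : Fin (N + 1) → Finset α)
    (hne : ∀ i, (τ i).Nonempty) (hdisj : ∀ i j, i ≠ j → Disjoint (τ i) (τ j))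
    (hcov : Finset.univ.biUnion τ = Finset.univ)
    (a : Fin N) (s : Finset α) (hs : s = pu τ a)
    (i j : α) (hi : i ∈ τ (Fin.castSucc a)) (hj : j ∈ τ a.succ) :
    MvPolynomial.X s * gm (k := k) τ
      + (∑ s1 : Finset α,
          if i ∈ s1 ∧ s1 ⊆ τ (Fin.castSucc a) ∧ (τ (Fin.castSucc a) \ s1).Nonempty then
            gm (k := k) (refine τ (Fin.castSucc a) s1 (τ (Fin.castSucc a) \ s1))
          else 0)
      + (∑ t1 : Finset α,
          if t1.Nonempty ∧ t1 ⊆ τ a.succ ∧ j ∈ τ a.succ \ t1 then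
            gm (k := k) (refine τ a.succ t1 (τ a.succ \ t1))
          else 0)
      ∈ IB α k := by
  subst hs
  set ca := Fin.castSucc a with hca
  have hcav : ca.val = a.val := rfl
  have hsuv : (a.succ).val = a.val + 1 := rfl
  -- basic membership facts
  have Fi_notin : ∀ b : Fin N, b.val < a.val → i ∉ pu τ b := by
    intro b hb hmem
    rcases mem_pu.mp hmem with ⟨e, he, hie⟩
    have hne' : e ≠ ca := by
      intro h; rw [h] at he; rw [hcav] at he; omega
    exact Finset.disjoint_left.mp (hdisj e ca hne') hie hi
  have F2 : j ∉ pu τ a := by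
    intro hmem
    rcases mem_pu.mp hmem with ⟨e, he, hje⟩
    have hne' : e ≠ a.succ := by
      intro h; rw [h, hsuv] at he; omega
    exact Finset.disjoint_left.mp (hdisj e a.succ hne') hje hj
  have F3 : i ∈ pu τ a := mem_pu.mpr ⟨ca, le_of_eq hcav, hi⟩
  have F4 : puLt τ ca ∪ τ ca = pu τ a := by
    ext x
    rw [Finset.mem_union, mem_puLt, mem_pu]
    constructor
    · rintro (⟨e, he, hx⟩ | hx)
      · exact ⟨e, by omega, hx⟩
      · exact ⟨ca, le_of_eq hcav, hx⟩
    · rintro ⟨e, he, hx⟩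
      rcases lt_or_eq_of_le he with h | h
      · exact Or.inl ⟨e, by omega, hx⟩
      · have : e = ca := Fin.ext (by rw [hcav]; exact h)
        exact Or.inr (this ▸ hx)
  have F5 : Disjoint (puLt τ ca) (τ ca) := by
    rw [Finset.disjoint_left]
    intro x hx hx2
    rcases mem_puLt.mp hx with ⟨e, he, hx3⟩
    have hne' : e ≠ ca := by intro h; rw [h, hcav] at he; omega
    exact Finset.disjoint_left.mp (hdisj e ca hne') hx3 hx2
  have F1 : i ∉ puLt τ ca := fun h => Finset.disjoint_left.mp F5 h hi
  have F6 : puLt τ a.succ = pu τ a := by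
    ext x
    rw [mem_puLt, mem_pu]
    constructor
    · rintro ⟨e, he, hx⟩; exact ⟨e, by rw [hsuv] at he; omega, hx⟩
    · rintro ⟨e, he, hx⟩; exact ⟨e, by rw [hsuv]; omega, hx⟩
  have F7 : Disjoint (pu τ a) (τ a.succ) := by
    rw [Finset.disjoint_left]
    intro x hx hx2
    rcases mem_pu.mp hx with ⟨e, he, hx3⟩
    have hne' : e ≠ a.succ := by intro h; rw [h, hsuv] at he; omega
    exact Finset.disjoint_left.mp (hdisj e a.succ hne') hx3 hx2
  have F8 : i ≠ j := fun h => F2 (h ▸ F3)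
  -- rewrite the first sum
  have hA : (∑ s1 : Finset α,
        if i ∈ s1 ∧ s1 ⊆ τ ca ∧ (τ ca \ s1).Nonempty then
          gm (k := k) (refine τ ca s1 (τ ca \ s1)) else 0)
      = ∑ t : Finset α,
        if i ∈ t ∧ puLt τ ca ⊆ t ∧ t ⊆ pu τ a ∧ (pu τ a \ t).Nonempty then
          MvPolynomial.X t * gm (k := k) τ else 0 := by
    rw [← Finset.sum_filter, ← Finset.sum_filter]
    refine Finset.sum_bij' (fun s1 _ => puLt τ ca ∪ s1) (fun t _ => t ∩ τ ca)
      ?_ ?_ ?_ ?_ ?_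
    · intro s1 hs1
      rw [Finset.mem_filter] at hs1 ⊢
      obtain ⟨-, h1, h2, h3⟩ := hs1
      refine ⟨Finset.mem_univ _, Finset.mem_union_right _ h1, Finset.subset_union_left, ?_, ?_⟩
      · rw [← F4]; exact Finset.union_subset_union_right h2
      · obtain ⟨x, hx⟩ := h3
        rw [Finset.mem_sdiff] at hx
        refine ⟨x, Finset.mem_sdiff.mpr ⟨?_, ?_⟩⟩
        · rw [← F4]; exact Finset.mem_union_right _ hx.1
        · rw [Finset.mem_union]
          push_neg
          exact ⟨fun h => Finset.disjoint_left.mp F5 h hx.1, hx.2⟩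
    · intro t ht
      rw [Finset.mem_filter] at ht ⊢
      obtain ⟨-, h1, h2, h3, h4⟩ := ht
      refine ⟨Finset.mem_univ _, Finset.mem_inter.mpr ⟨h1, hi⟩, Finset.inter_subset_right, ?_⟩
      obtain ⟨x, hx⟩ := h4
      rw [Finset.mem_sdiff] at hx
      have hxca : x ∈ τ ca := by
        have := hx.1
        rw [← F4, Finset.mem_union] at this
        rcases this with h | h
        · exact absurd (h2 h) hx.2
        · exact h
      exact ⟨x, Finset.mem_sdiff.mpr ⟨hxca, fun h => hx.2 (Finset.mem_inter.mp h).1⟩⟩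
    · intro s1 hs1
      rw [Finset.mem_filter] at hs1
      show (puLt τ ca ∪ s1) ∩ τ ca = s1
      rw [Finset.union_inter_distrib_right,
        (Finset.disjoint_iff_inter_eq_empty.mp F5),
        Finset.inter_eq_left.mpr hs1.2.2.1, Finset.empty_union]
    · intro t ht
      rw [Finset.mem_filter] at ht
      show puLt τ ca ∪ t ∩ τ ca = t
      apply Finset.Subset.antisymm
      · exact Finset.union_subset ht.2.2.1 Finset.inter_subset_left
      · intro x hx
        have := ht.2.2.2.1 hx
        rw [← F4, Finset.mem_union] at this
        rcases this with h | h
        · exact Finset.mem_union_left _ h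
        · exact Finset.mem_union_right _ (Finset.mem_inter.mpr ⟨hx, h⟩)
    · intro s1 hs1
      rw [Finset.mem_filter] at hs1
      rw [gm_refine τ ca s1 _ (Finset.union_sdiff_of_subset hs1.2.2.1)]
  -- rewrite the second sum
  have hB : (∑ t1 : Finset α,
        if t1.Nonempty ∧ t1 ⊆ τ a.succ ∧ j ∈ τ a.succ \ t1 then
          gm (k := k) (refine τ a.succ t1 (τ a.succ \ t1)) else 0)
      = ∑ t : Finset α,
        if pu τ a ⊆ t ∧ t ⊆ pu τ a ∪ τ a.succ ∧ j ∉ t ∧ (t \ pu τ a).Nonempty then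
          MvPolynomial.X t * gm (k := k) τ else 0 := by
    rw [← Finset.sum_filter, ← Finset.sum_filter]
    refine Finset.sum_bij' (fun t1 _ => pu τ a ∪ t1) (fun t _ => t ∩ τ a.succ)
      ?_ ?_ ?_ ?_ ?_
    · intro t1 ht1
      rw [Finset.mem_filter] at ht1 ⊢
      obtain ⟨-, h1, h2, h3⟩ := ht1
      rw [Finset.mem_sdiff] at h3
      refine ⟨Finset.mem_univ _, Finset.subset_union_left, Finset.union_subset_union_right h2, ?_, ?_⟩
      · rw [Finset.mem_union]; push_neg; exact ⟨F2, h3.2⟩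
      · obtain ⟨x, hx⟩ := h1
        refine ⟨x, Finset.mem_sdiff.mpr ⟨Finset.mem_union_right _ hx, ?_⟩⟩
        exact fun h => Finset.disjoint_left.mp F7 h (h2 hx)
    · intro t ht
      rw [Finset.mem_filter] at ht ⊢
      obtain ⟨-, h1, h2, h3, h4⟩ := ht
      refine ⟨Finset.mem_univ _, ?_, Finset.inter_subset_right, ?_⟩
      · obtain ⟨x, hx⟩ := h4
        rw [Finset.mem_sdiff] at hx
        have hxs : x ∈ τ a.succ := by
          have := h2 hx.1
          rw [Finset.mem_union] at this
          rcases this with h | h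
          · exact absurd h hx.2
          · exact h
        exact ⟨x, Finset.mem_inter.mpr ⟨hx.1, hxs⟩⟩
      · rw [Finset.mem_sdiff]
        exact ⟨hj, fun h => h3 (Finset.mem_inter.mp h).1⟩
    · intro t1 ht1
      rw [Finset.mem_filter] at ht1
      show (pu τ a ∪ t1) ∩ τ a.succ = t1
      rw [Finset.union_inter_distrib_right,
        (Finset.disjoint_iff_inter_eq_empty.mp F7),
        Finset.inter_eq_left.mpr ht1.2.2.1, Finset.empty_union]
    · intro t ht
      rw [Finset.mem_filter] at ht
      show pu τ a ∪ t ∩ τ a.succ = t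
      apply Finset.Subset.antisymm
      · exact Finset.union_subset ht.2.1 Finset.inter_subset_left
      · intro x hx
        have := ht.2.2.1 hx
        rw [Finset.mem_union] at this
        rcases this with h | h
        · exact Finset.mem_union_left _ h
        · exact Finset.mem_union_right _ (Finset.mem_inter.mpr ⟨hx, h⟩)
    · intro t1 ht1
      rw [Finset.mem_filter] at ht1
      rw [gm_refine τ a.succ t1 _ (Finset.union_sdiff_of_subset ht1.2.2.1), F6]
  rw [hA, hB]
  -- the linear relation
  have hr : (∑ t : Finset α, if i ∈ t ∧ j ∉ t then MvPolynomial.X t else 0) -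
      (∑ t : Finset α, if j ∈ t ∧ i ∉ t then MvPolynomial.X t else 0) ∈ IB α k :=
    Ideal.subset_span (Set.mem_union_left _ ⟨i, j, F8, rfl⟩)
  have hgr : gm (k := k) τ *
      ((∑ t : Finset α, if i ∈ t ∧ j ∉ t then MvPolynomial.X t else 0) -
       (∑ t : Finset α, if j ∈ t ∧ i ∉ t then MvPolynomial.X t else 0)) ∈ IB α k :=
    Ideal.mul_mem_left _ _ hr
  -- the difference terms
  set D : Finset α → MvPolynomial (Finset α) k := fun t =>
    (if t = pu τ a then MvPolynomial.X t * gm (k := k) τ else 0)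
    + (if i ∈ t ∧ puLt τ ca ⊆ t ∧ t ⊆ pu τ a ∧ (pu τ a \ t).Nonempty then
        MvPolynomial.X t * gm (k := k) τ else 0)
    + (if pu τ a ⊆ t ∧ t ⊆ pu τ a ∪ τ a.succ ∧ j ∉ t ∧ (t \ pu τ a).Nonempty then
        MvPolynomial.X t * gm (k := k) τ else 0)
    - gm (k := k) τ * (if i ∈ t ∧ j ∉ t then MvPolynomial.X t else 0)
    + gm (k := k) τ * (if j ∈ t ∧ i ∉ t then MvPolynomial.X t else 0) with hD
  have key : MvPolynomial.X (pu τ a) * gm (k := k) τ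
      + (∑ t : Finset α,
          if i ∈ t ∧ puLt τ ca ⊆ t ∧ t ⊆ pu τ a ∧ (pu τ a \ t).Nonempty then
            MvPolynomial.X t * gm (k := k) τ else 0)
      + (∑ t : Finset α,
          if pu τ a ⊆ t ∧ t ⊆ pu τ a ∪ τ a.succ ∧ j ∉ t ∧ (t \ pu τ a).Nonempty then
            MvPolynomial.X t * gm (k := k) τ else 0)
      = (∑ t : Finset α, D t)
        + gm (k := k) τ *
          ((∑ t : Finset α, if i ∈ t ∧ j ∉ t then MvPolynomial.X t else 0) -
           (∑ t : Finset α, if j ∈ t ∧ i ∉ t then MvPolynomial.X t else 0)) := by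
    have hσ : MvPolynomial.X (pu τ a) * gm (k := k) τ
        = ∑ t : Finset α, if t = pu τ a then MvPolynomial.X t * gm (k := k) τ else 0 := by
      rw [Finset.sum_ite_eq' Finset.univ (pu τ a)
        (fun t => MvPolynomial.X t * gm (k := k) τ)]
      simp
    rw [hσ, mul_sub, Finset.mul_sum, Finset.mul_sum, ← Finset.sum_add_distrib,
      ← Finset.sum_add_distrib, ← Finset.sum_sub_distrib, ← Finset.sum_add_distrib]
    exact Finset.sum_congr rfl fun t _ => by rw [hD]; beta_reduce; ring
  rw [key]
  refine Ideal.add_mem _ (Ideal.sum_mem _ fun t _ => ?_) hgr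
  -- quadratic membership helper
  have quad : ∀ (u v : α), u ∈ t → v ∉ t → ∀ b : Fin N, v ∈ pu τ b → u ∉ pu τ b →
      MvPolynomial.X t * gm (k := k) τ ∈ IB α k := by
    intro u v hu hv b hv2 hu2
    have hgm : gm (k := k) τ = MvPolynomial.X (pu τ b) *
        ∏ x ∈ Finset.univ.erase b, MvPolynomial.X (pu τ x) :=
      (Finset.mul_prod_erase _ _ (Finset.mem_univ b)).symm
    rw [hgm, ← mul_assoc]
    exact Ideal.mul_mem_right _ _
      (Ideal.subset_span (Set.mem_union_right _ ⟨t, pu τ b, ⟨u, v, hu, hv, hv2, hu2⟩, rfl⟩))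
  by_cases h1 : j ∈ t ∧ i ∉ t
  · have e : D t = MvPolynomial.X t * gm (k := k) τ := by
      rw [hD]; beta_reduce
      rw [if_neg (show ¬ t = pu τ a from fun h => h1.2 (by rw [h]; exact F3)),
        if_neg (fun h => h1.2 h.1),
        if_neg (fun h => h.2.2.1 h1.1),
        if_neg (fun h => h1.2 h.1), if_pos h1]
      ring
    rw [e]
    exact quad j i h1.1 h1.2 a F3 F2
  · by_cases h2 : i ∈ t ∧ j ∉ t
    · by_cases hσt : t = pu τ a
      · have e : D t = 0 := by
          rw [hD]; beta_reduce
          rw [if_pos hσt,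
            if_neg (fun h => by
              obtain ⟨x, hx⟩ := h.2.2.2
              rw [Finset.mem_sdiff, hσt] at hx
              exact hx.2 hx.1),
            if_neg (fun h => by
              obtain ⟨x, hx⟩ := h.2.2.2
              rw [Finset.mem_sdiff, hσt] at hx
              exact hx.2 hx.1),
            if_pos h2, if_neg h1]
          ring
        rw [e]; exact Ideal.zero_mem _
      · by_cases hQA : i ∈ t ∧ puLt τ ca ⊆ t ∧ t ⊆ pu τ a ∧ (pu τ a \ t).Nonempty
        · have e : D t = 0 := by
            rw [hD]; beta_reduce
            rw [if_neg hσt, if_pos hQA,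
              if_neg (fun h => by
                obtain ⟨x, hx⟩ := hQA.2.2.2
                rw [Finset.mem_sdiff] at hx
                exact hx.2 (h.1 hx.1)),
              if_pos h2, if_neg h1]
            ring
          rw [e]; exact Ideal.zero_mem _
        · by_cases hQB : pu τ a ⊆ t ∧ t ⊆ pu τ a ∪ τ a.succ ∧ j ∉ t ∧ (t \ pu τ a).Nonempty
          · have e : D t = 0 := by
              rw [hD]; beta_reduce
              rw [if_neg hσt, if_neg hQA, if_pos hQB, if_pos h2, if_neg h1]
              ring
            rw [e]; exact Ideal.zero_mem _
          · -- t incompatible with some pu τ b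
            have e : D t = -(MvPolynomial.X t * gm (k := k) τ) := by
              rw [hD]; beta_reduce
              rw [if_neg hσt, if_neg hQA, if_neg hQB, if_pos h2, if_neg h1]
              ring
            rw [e]
            refine neg_mem ?_
            have hcomp : ¬ (∀ b : Fin N, t ⊆ pu τ b ∨ pu τ b ⊆ t) := by
              intro hall
              rcases hall a with h | h
              · apply hQA
                refine ⟨h2.1, ?_, h, ?_⟩
                · intro x hx
                  rcases mem_puLt.mp hx with ⟨e', he', hx2⟩
                  have he'N : e'.val < N := by have := a.isLt; omega
                  have hb : (⟨e'.val, he'N⟩ : Fin N).val < a.val := by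
                    simp only [Fin.val_mk]; rw [hcav] at he'; exact he'
                  rcases hall ⟨e'.val, he'N⟩ with hh | hh
                  · exact absurd (hh h2.1) (Fi_notin _ hb)
                  · exact hh (mem_pu.mpr ⟨e', by simp only [Fin.val_mk]; exact le_rfl, hx2⟩)
                · rw [Finset.sdiff_nonempty]
                  exact fun hsub => hσt (Finset.Subset.antisymm h hsub)
              · apply hQB
                refine ⟨h, ?_, h2.2, ?_⟩
                · intro x hx
                  by_cases hN : a.val + 1 < N
                  · rcases hall ⟨a.val + 1, hN⟩ with hh | hh
                    · have := hh hx
                      rcases mem_pu.mp this with ⟨e', he', hx2⟩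
                      simp only [Fin.val_mk] at he'
                      rcases Nat.lt_or_ge e'.val (a.val + 1) with h3 | h3
                      · exact Finset.mem_union_left _ (mem_pu.mpr ⟨e', by omega, hx2⟩)
                      · have : e' = a.succ := Fin.ext (by rw [hsuv]; omega)
                        exact Finset.mem_union_right _ (this ▸ hx2)
                    · exact absurd (hh (mem_pu.mpr ⟨a.succ, by simp [hsuv], hj⟩)) h2.2
                  · have hxu : x ∈ Finset.univ.biUnion τ := by rw [hcov]; exact Finset.mem_univ x
                    rcases Finset.mem_biUnion.mp hxu with ⟨e', -, hx2⟩
                    have he' : e'.val ≤ a.val + 1 := by have := e'.isLt; have := a.isLt; omega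
                    rcases Nat.lt_or_ge e'.val (a.val + 1) with h3 | h3
                    · exact Finset.mem_union_left _ (mem_pu.mpr ⟨e', by omega, hx2⟩)
                    · have : e' = a.succ := Fin.ext (by rw [hsuv]; omega)
                      exact Finset.mem_union_right _ (this ▸ hx2)
                · rw [Finset.sdiff_nonempty]
                  exact fun hsub => hσt (Finset.Subset.antisymm hsub h)
            push_neg at hcomp
            obtain ⟨b, hb1, hb2⟩ := hcomp
            obtain ⟨u, hu, hu2⟩ := Finset.not_subset.mp hb1
            obtain ⟨v, hv, hv2⟩ := Finset.not_subset.mp hb2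
            exact quad u v hu hv2 b hv hu2
    · have e : D t = 0 := by
        rw [hD]; beta_reduce
        rw [if_neg (show ¬ t = pu τ a from fun h => h2 ⟨by rw [h]; exact F3, by rw [h]; exact F2⟩),
          if_neg (fun h => h2 ⟨h.1, fun hjt => F2 (h.2.2.1 hjt)⟩),
          if_neg (fun h => h2 ⟨h.1 F3, h.2.2.1⟩),
          if_neg h2, if_neg h1]
        ring
      rw [e]; exact Ideal.zero_mem _
end
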